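/- Let ε, κ̄, u^s, u^r, f^s, f^l : ℝ³ → ℝ with ε and u^s, u^r twice continuously differentiable. Suppose that (i) −∇·(ε∇(u^s + u^r)) + κ̄² sinh(u^s + u^r) = f^s + f^l holds pointwise on ℝ³, (ii) −∇·(ε∇u^s) = f^s holds pointwise on ℝ³, and (iii) κ̄(x)·u^s(x) = 0 for every x ∈ ℝ³. Then the long-range component satisfies the nonlinear regularized Poisson–Boltzmann equation −∇·(ε∇u^r) + κ̄² sinh(u^r) = f^l pointwise on ℝ³. -/

import Mathlib

/-- Partial derivative of a scalar function on ℝ³ along the ℓ-th coordinate. -/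
noncomputable def pderiv3 (ℓ : Fin 3) (f : EuclideanSpace ℝ (Fin 3) → ℝ)
    (x : EuclideanSpace ℝ (Fin 3)) : ℝ :=
  fderiv ℝ f x (EuclideanSpace.single ℓ (1 : ℝ))

/-- `∇·(ε∇v)(x) = Σ_{ℓ=1}^{3} ∂/∂x_ℓ (ε·∂v/∂x_ℓ)(x)`. -/
noncomputable def divEpsGrad (ε v : EuclideanSpace ℝ (Fin 3) → ℝ)
    (x : EuclideanSpace ℝ (Fin 3)) : ℝ :=
  ∑ ℓ : Fin 3, pderiv3 ℓ (fun y => ε y * pderiv3 ℓ v y) x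

section PartialDerivatives

variable {ℓ : Fin 3} {f g : EuclideanSpace ℝ (Fin 3) → ℝ}

theorem pderiv3_add {x : EuclideanSpace ℝ (Fin 3)} (hf : DifferentiableAt ℝ f x)
    (hg : DifferentiableAt ℝ g x) :
    pderiv3 ℓ (fun y => f y + g y) x = pderiv3 ℓ f x + pderiv3 ℓ g x := by
  simp only [pderiv3, fderiv_fun_add hf hg, add_apply]

theorem ContDiff.pderiv3 {n : WithTop ℕ∞} (hf : ContDiff ℝ (n + 1) f) :
    ContDiff ℝ n (pderiv3 ℓ f) :=
  (hf.fderiv_right le_rfl).clm_apply contDiff_const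

end PartialDerivatives

theorem divEpsGrad_add {ε u v : EuclideanSpace ℝ (Fin 3) → ℝ} (hε : Differentiable ℝ ε)
    (hu : ContDiff ℝ 2 u) (hv : ContDiff ℝ 2 v) (x : EuclideanSpace ℝ (Fin 3)) :
    divEpsGrad ε (fun y => u y + v y) x = divEpsGrad ε u x + divEpsGrad ε v x := by
  simp only [divEpsGrad, ← Finset.sum_add_distrib]
  refine Finset.sum_congr rfl fun ℓ _ => ?_
  have hflux_u : Differentiable ℝ fun y => ε y * pderiv3 ℓ u y :=
    hε.mul ((hu.pderiv3 (n := 1)).differentiable one_ne_zero)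
  have hflux_v : Differentiable ℝ fun y => ε y * pderiv3 ℓ v y :=
    hε.mul ((hv.pderiv3 (n := 1)).differentiable one_ne_zero)
  have hflux_add : (fun y => ε y * pderiv3 ℓ (fun z => u z + v z) y)
      = fun y => ε y * pderiv3 ℓ u y + ε y * pderiv3 ℓ v y := funext fun y => by
    rw [pderiv3_add (hu.differentiable two_ne_zero y) (hv.differentiable two_ne_zero y), mul_add]
  rw [hflux_add, pderiv3_add (hflux_u x) (hflux_v x)]

theorem sq_mul_sinh_add_of_mul_eq_zero {k a b : ℝ} (h : k * a = 0) :
    k ^ 2 * Real.sinh (a + b) = k ^ 2 * Real.sinh b := by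
  rcases mul_eq_zero.1 h with hk | ha
  · simp [hk]
  · simp [ha]

/-- Derivation of the nonlinear regularized Poisson–Boltzmann equation: if
`−∇·(ε∇(u^s+u^r)) + κ̄² sinh(u^s+u^r) = f^s + f^l`, the short-range potential solves
`−∇·(ε∇u^s) = f^s`, and `κ̄·u^s = 0` pointwise, then
`−∇·(ε∇u^r) + κ̄² sinh(u^r) = f^l` pointwise on ℝ³. -/
theorem nrpbe_derivation (ε κ us ur fs fl : EuclideanSpace ℝ (Fin 3) → ℝ)
    (hε : ContDiff ℝ 2 ε) (hus : ContDiff ℝ 2 us) (hur : ContDiff ℝ 2 ur)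
    (hfull : ∀ x, -divEpsGrad ε (fun y => us y + ur y) x
        + (κ x) ^ 2 * Real.sinh (us x + ur x) = fs x + fl x)
    (hshort : ∀ x, -divEpsGrad ε us x = fs x)
    (hvanish : ∀ x, κ x * us x = 0) :
    ∀ x, -divEpsGrad ε ur x + (κ x) ^ 2 * Real.sinh (ur x) = fl x := by
  intro x
  have hfull_x := hfull x
  rw [divEpsGrad_add (hε.differentiable two_ne_zero) hus hur,
    sq_mul_sinh_add_of_mul_eq_zero (hvanish x)] at hfull_x
  linarith [hshort x]
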